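/- Let m ≥ 2 and λ ∈ ℤ/mℤ with λ ∉ {0, 1}. Define τ on subsets of ℤ/mℤ by τ(S) = S ∪ {x : x - λ ∈ S and x - λ + 1 ∈ S}. Then the interval I = {0, 1, ..., ⌈m/2⌉ - 1} (of size ⌊(m+1)/2⌋) is a plague: iterating τ from I eventually gives all of ℤ/mℤ. -/
import Mathlib


theorem stmt_11 (m : ℕ) (hm : 2 ≤ m) (l : ZMod m)
    (hl : l ≠ 0 ∧ l ≠ 1)
    (τ : Set (ZMod m) → Set (ZMod m))
    (hτ : ∀ S, τ S = S ∪ {x | x - l ∈ S ∧ x - l + 1 ∈ S})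
    (I : Set (ZMod m)) (hI : I = {x : ZMod m | x.val < (m + 1) / 2}) :
    ∃ n : ℕ, τ^[n] I = Set.univ := by
  classical
  obtain ⟨hl0, hl1⟩ := hl
  haveI : NeZero m := ⟨by omega⟩
  have hsub : ∀ S : Set (ZMod m), S ⊆ τ S := fun S => by
    rw [hτ]; exact Set.subset_union_left
  have hmono : ∀ j : ℕ, τ^[j] I ⊆ τ^[j+1] I := fun j => by
    rw [Function.iterate_succ_apply']; exact hsub _
  -- stabilization
  have hstab : ∃ n : ℕ, τ^[n+1] I = τ^[n] I := by
    by_contra h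
    push_neg at h
    have hcard : ∀ j : ℕ, j ≤ (τ^[j] I).ncard := by
      intro j
      induction j with
      | zero => omega
      | succ j ih =>
        have hss : τ^[j] I ⊂ τ^[j+1] I :=
          ssubset_of_subset_of_ne (hmono j) (Ne.symm (h j))
        have := Set.ncard_lt_ncard hss (Set.toFinite _)
        omega
    have h1 := hcard (m+1)
    have h2 : (τ^[m+1] I).ncard ≤ m := by
      have := Set.ncard_le_ncard (Set.subset_univ (τ^[m+1] I)) (Set.toFinite _)
      rwa [Set.ncard_univ, Nat.card_zmod] at this
    omega
  obtain ⟨n, hn⟩ := hstab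
  set F := τ^[n] I with hF
  have hτF : τ F = F := (Function.iterate_succ_apply' τ n I).symm.trans hn
  have hclose : ∀ x : ZMod m, x - l ∈ F → x - l + 1 ∈ F → x ∈ F := by
    intro x h1 h2
    have hx : x ∈ τ F := by rw [hτ]; exact Or.inr ⟨h1, h2⟩
    rwa [hτF] at hx
  have hIF : I ⊆ F := by
    have : ∀ j : ℕ, I ⊆ τ^[j] I := by
      intro j
      induction j with
      | zero => exact subset_rfl
      | succ j ih => exact ih.trans (hmono j)
    exact this n
  set k := (m + 1) / 2 with hk
  have hkm : k ≤ m := by omega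
  -- the property of admitting an interval of length L
  set P : ℕ → Prop := fun L => ∃ a : ZMod m, ∀ i : ℕ, i < L → a + (i : ZMod m) ∈ F with hP
  have hPk : P k := by
    refine ⟨0, fun i hi => ?_⟩
    apply hIF
    rw [hI]
    have : ((i : ZMod m)).val = i := ZMod.val_cast_of_lt (by omega)
    simp only [Set.mem_setOf_eq, zero_add, this]
    omega
  refine ⟨n, ?_⟩
  by_cases hPm : P m
  · -- F already contains an interval of length m, so F = univ
    obtain ⟨a, ha⟩ := hPm
    rw [← hF]
    ext x
    simp only [Set.mem_univ, iff_true]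
    have hx : x = a + (((x - a).val : ℕ) : ZMod m) := by
      rw [ZMod.natCast_val, ZMod.cast_id]; ring
    rw [hx]
    exact ha _ (ZMod.val_lt _)
  exfalso
  set L := Nat.findGreatest P m with hLdef
  have hL1 : k ≤ L := Nat.le_findGreatest hkm hPk
  have hLm : L ≤ m := Nat.findGreatest_le m
  have hPL : P L := Nat.findGreatest_spec hkm hPk
  have hLm' : L < m := by
    rcases lt_or_eq_of_le hLm with h | h
    · exact h
    · exact absurd (h ▸ hPL) hPm
  have hnot : ¬ P (L + 1) := Nat.findGreatest_is_greatest (hLdef ▸ Nat.lt_succ_self L) (by omega)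
  obtain ⟨a, ha⟩ := hPL
  -- the interval is maximal on both sides
  have haL : a + ((L : ℕ) : ZMod m) ∉ F := by
    intro h
    apply hnot
    refine ⟨a, fun i hi => ?_⟩
    rcases lt_or_eq_of_le (Nat.lt_succ_iff.mp hi) with h' | h'
    · exact ha i h'
    · rw [h']; exact h
  have hm1 : ((m - 1 : ℕ) : ZMod m) = -1 := by
    have : ((m - 1 : ℕ) : ZMod m) = (m : ZMod m) - 1 := by
      push_cast [Nat.cast_sub (show 1 ≤ m by omega)]; ring
    rw [this, ZMod.natCast_self]; ring
  have ham : a + ((m - 1 : ℕ) : ZMod m) ∉ F := by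
    intro h
    apply hnot
    refine ⟨a + ((m - 1 : ℕ) : ZMod m), fun i hi => ?_⟩
    match i with
    | 0 => simpa using h
    | j + 1 =>
      have he : a + ((m - 1 : ℕ) : ZMod m) + ((j + 1 : ℕ) : ZMod m) = a + (j : ZMod m) := by
        rw [hm1]; push_cast; ring
      rw [he]
      exact ha j (by omega)
  -- the shifted interval is in F
  have hshift : ∀ i : ℕ, i < L - 1 → a + (i : ZMod m) + l ∈ F := by
    intro i hi
    apply hclose
    · have : a + (i : ZMod m) + l - l = a + (i : ZMod m) := by ring
      rw [this]; exact ha i (by omega)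
    · have : a + (i : ZMod m) + l - l + 1 = a + ((i + 1 : ℕ) : ZMod m) := by
        push_cast; ring
      rw [this]; exact ha (i + 1) (by omega)
  set d := l.val with hd
  have hdm : d < m := ZMod.val_lt l
  have hld : ((d : ℕ) : ZMod m) = l := by rw [hd, ZMod.natCast_val, ZMod.cast_id]
  have hd0 : d ≠ 0 := fun h => hl0 ((ZMod.val_eq_zero l).mp h)
  have hd1 : d ≠ 1 := by
    intro h
    apply hl1
    rw [← hld, h]
    norm_num
  -- key numerical consequence
  have key : ∀ i : ℕ, i < L - 1 → (d + i) % m ≠ L ∧ (d + i) % m ≠ m - 1 := by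
    intro i hi
    have hmem : a + (((d + i) % m : ℕ) : ZMod m) ∈ F := by
      have he : (((d + i) % m : ℕ) : ZMod m) = (i : ZMod m) + l := by
        rw [ZMod.natCast_mod]; push_cast [← hld]; ring
      rw [he, ← add_assoc]
      exact hshift i hi
    constructor
    · intro hEq; exact haL (hEq ▸ hmem)
    · intro hEq; exact ham (hEq ▸ hmem)
  have hd2 : 2 ≤ d := by omega
  have hL2 : 2 ≤ L := by omega
  rcases le_or_gt (m - 1) (d + (L - 2)) with hc | hc
  · refine (key (m - 1 - d) (by omega)).2 ?_
    rw [show d + (m - 1 - d) = m - 1 by omega, Nat.mod_eq_of_lt (by omega)]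
  · have hdL : d ≤ L := by omega
    refine (key (L - d) (by omega)).1 ?_
    rw [show d + (L - d) = L by omega, Nat.mod_eq_of_lt (by omega)]
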